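/- arXiv:0907.5570 — 3 statements merged into one kernel-verified Lean document; each statement's English description precedes it below -/
import Mathlib

section
/- Let a topological groupoid G act freely and properly on its unit space G⁰ (via γ·s(γ) = r(γ)). Then for each unit u ∈ G⁰ and each open neighborhood N of u in G, there exists an open neighborhood U of u in G⁰ such that every γ ∈ G with γ·U ∩ U ≠ ∅ (i.e. s(γ) ∈ U and r(γ) ∈ U) lies in N. -/
open MeasureTheory Topology Set

structure TopGroupoid (G : Type*) [TopologicalSpace G] where
  src : G → G
  rng : G → G
  mul : G → G → G
  inv : G → G
  continuous_src : Continuous src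
  continuous_rng : Continuous rng
  continuous_inv : Continuous inv
  continuous_mul : Continuous fun p : {p : G × G // src p.1 = rng p.2} => mul p.1.1 p.1.2
  src_rng : ∀ γ, src (rng γ) = rng γ
  rng_rng : ∀ γ, rng (rng γ) = rng γ
  src_src : ∀ γ, src (src γ) = src γ
  rng_src : ∀ γ, rng (src γ) = src γ
  rng_mul : ∀ γ η, src γ = rng η → rng (mul γ η) = rng γ
  src_mul : ∀ γ η, src γ = rng η → src (mul γ η) = src η
  mul_assoc' : ∀ γ η ζ, src γ = rng η → src η = rng ζ → mul (mul γ η) ζ = mul γ (mul η ζ)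
  unit_mul : ∀ γ, mul (rng γ) γ = γ
  mul_unit : ∀ γ, mul γ (src γ) = γ
  src_inv : ∀ γ, src (inv γ) = rng γ
  rng_inv : ∀ γ, rng (inv γ) = src γ
  mul_inv : ∀ γ, mul γ (inv γ) = rng γ
  inv_mul : ∀ γ, mul (inv γ) γ = src γ

namespace TopGroupoid

variable {G : Type*} [TopologicalSpace G] (S : TopGroupoid G)

/-- The unit space `G⁰` of the groupoid. -/
def units : Set G := {u | S.rng u = u ∧ S.src u = u}

/-- The source of an arrow, as an element of the unit space. -/
def srcU (γ : G) : S.units := ⟨S.src γ, S.rng_src γ, S.src_src γ⟩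

/-- The range of an arrow, as an element of the unit space. -/
def rngU (γ : G) : S.units := ⟨S.rng γ, S.rng_rng γ, S.src_rng γ⟩

/-- Freeness of the natural action of `G` on its unit space:
`γ · s(γ) = r(γ)`, so `γ·u = u` forces `γ` to be a unit. -/
def IsFree : Prop := ∀ γ : G, S.rng γ = S.src γ → γ ∈ S.units

/-- Properness of the natural action of `G` on its unit space:
`γ ↦ (r(γ), s(γ))` is a proper map. -/
def IsProper : Prop := IsProperMap (fun γ : G => (S.rng γ, S.src γ))

/-- Product of two subsets of a groupoid. -/
def setMul (A B : Set G) : Set G :=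
  {z | ∃ a ∈ A, ∃ b ∈ B, S.src a = S.rng b ∧ z = S.mul a b}

end TopGroupoid

/-- A Haar system `{λᵘ}` on a topological groupoid. -/
structure HaarSystem {G : Type*} [TopologicalSpace G] [MeasurableSpace G]
    (S : TopGroupoid G) where
  lam : G → MeasureTheory.Measure G
  supported : ∀ u : G, lam u {γ | S.rng γ ≠ u} = 0
  invariant : ∀ γ : G, (lam (S.src γ)).map (S.mul γ) = lam (S.rng γ)
  cts : ∀ ψ : G → ℝ, Continuous ψ → HasCompactSupport ψ →
    Continuous fun u => ∫ γ, ψ γ ∂ lam u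
  full : ∀ u ∈ S.units, ∀ V : Set G, IsOpen V → u ∈ V → 0 < lam u V
  bdd : ∀ K : Set G, IsCompact K → ∃ C : ENNReal, C < ⊤ ∧ ∀ u : G, lam u K ≤ C

/-- A continuous action of a topological groupoid `S` on a space `X`,
with anchor map `r_X : X → G⁰`. -/
structure GroupoidAction {G : Type*} [TopologicalSpace G] (S : TopGroupoid G)
    (X : Type*) [TopologicalSpace X] where
  anchor : X → G
  anchor_mem : ∀ x, anchor x ∈ S.units
  continuous_anchor : Continuous anchor
  act : G → X → X
  act_anchor : ∀ γ x, S.src γ = anchor x → anchor (act γ x) = S.rng γ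
  act_unit : ∀ x, act (anchor x) x = x
  act_mul : ∀ γ η x, S.src γ = S.rng η → S.src η = anchor x →
    act (S.mul γ η) x = act γ (act η x)
  continuous_act :
    Continuous fun p : {p : G × X // S.src p.1 = anchor p.2} => act p.1.1 p.1.2

namespace GroupoidAction

variable {G : Type*} [TopologicalSpace G] {S : TopGroupoid G}
variable {X : Type*} [TopologicalSpace X]

/-- Properness of a groupoid action: `(γ, x) ↦ (γ·x, x)` is a proper map. -/
def IsProper (A : GroupoidAction S X) : Prop :=
  IsProperMap fun p : {p : G × X // S.src p.1 = A.anchor p.2} =>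
    (A.act p.1.1 p.1.2, p.1.2)

/-- The orbit relation `x ~ γ·x` on `X`. -/
def orbitRel (A : GroupoidAction S X) : X → X → Prop :=
  fun x y => ∃ γ : G, S.src γ = A.anchor x ∧ A.act γ x = y

end GroupoidAction

/-- An upper semicontinuous C*-bundle (total-space picture), recording the data
needed here: continuous open surjective projection, upper semicontinuous norm,
zero section, and continuous fiberwise operations. -/
structure USCBundle (X : Type*) [TopologicalSpace X]
    (E : Type*) [TopologicalSpace E] where
  proj : E → X
  continuous_proj : Continuous proj
  open_proj : IsOpenMap proj
  surj_proj : Function.Surjective proj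
  nrm : E → ℝ
  nrm_nonneg : ∀ a, 0 ≤ nrm a
  nrm_usc : ∀ c : ℝ, IsOpen {a | nrm a < c}
  zero : X → E
  proj_zero : ∀ x, proj (zero x) = x
  continuous_zero : Continuous zero
  nrm_zero : ∀ x, nrm (zero x) = 0
  add : E → E → E
  proj_add : ∀ a b, proj a = proj b → proj (add a b) = proj a
  continuous_add : Continuous fun p : {p : E × E // proj p.1 = proj p.2} => add p.1.1 p.1.2
  sub : E → E → E
  proj_sub : ∀ a b, proj a = proj b → proj (sub a b) = proj a
  continuous_sub : Continuous fun p : {p : E × E // proj p.1 = proj p.2} => sub p.1.1 p.1.2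
  emul : E → E → E
  continuous_emul : Continuous fun p : {p : E × E // proj p.1 = proj p.2} => emul p.1.1 p.1.2
  estar : E → E
  continuous_estar : Continuous estar


/-
Freeness says that the only arrow over the diagonal point `(u, u)` is `u` itself, which lies
in `N`. A proper map is closed, so the arrows outside `N` have closed image under
`γ ↦ (r(γ), s(γ))`, missing `(u, u)`; a square `U × U` around `(u, u)` avoiding that image works.
-/

namespace TopGroupoid

variable {G : Type*} [TopologicalSpace G] {S : TopGroupoid G}

theorem IsFree.eq_of_rng_eq_of_src_eq (hfree : S.IsFree) {γ u : G} (hr : S.rng γ = u)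
    (hs : S.src γ = u) : γ = u :=
  hr ▸ (hfree γ (hr.trans hs.symm)).1.symm

theorem eventually_nhds_diag_rng_src_mem (hfree : S.IsFree) (hproper : S.IsProper) {u : G}
    {N : Set G} (hN : IsOpen N) (huN : u ∈ N) :
    ∀ᶠ p in 𝓝 (u, u), ∀ γ, (S.rng γ, S.src γ) = p → γ ∈ N :=
  hproper.isClosedMap.eventually_nhds_fiber (u, u) fun γ hγ => by
    obtain ⟨hr, hs⟩ := Prod.mk.inj hγ
    exact hN.mem_nhds (hfree.eq_of_rng_eq_of_src_eq hr hs ▸ huN)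

end TopGroupoid

theorem free_proper_small_neighborhood_general {G : Type*} [TopologicalSpace G]
    (S : TopGroupoid G) (hfree : S.IsFree) (hproper : S.IsProper)
    (u : G) (N : Set G) (hN : IsOpen N) (huN : u ∈ N) :
    ∃ U : Set G, IsOpen U ∧ u ∈ U ∧
      ∀ γ : G, S.src γ ∈ U ∩ S.units → S.rng γ ∈ U → γ ∈ N := by
  have hsmall := S.eventually_nhds_diag_rng_src_mem hfree hproper hN huN
  rw [nhds_prod_eq] at hsmall
  obtain ⟨U, ⟨huU, hU⟩, hUN⟩ := (nhds_basis_opens u).prod_self.eventually_iff.mp hsmall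
  exact ⟨U, hU, huU, fun γ hs hr => hUN ⟨hr, hs.1⟩ γ rfl⟩

/-- If a groupoid `G` acts freely and properly on its unit space, then for each
unit `u` and open neighborhood `N` of `u` in `G`, there is an open neighborhood
`U` of `u` in `G⁰` such that `{γ : γ·U ∩ U ≠ ∅} ⊆ N`. -/
theorem free_proper_small_neighborhood {G : Type*} [TopologicalSpace G]
    [T2Space G] [LocallyCompactSpace G] [SecondCountableTopology G]
    (S : TopGroupoid G) (hfree : S.IsFree) (hproper : S.IsProper)
    (u : G) (hu : u ∈ S.units) (N : Set G) (hN : IsOpen N) (huN : u ∈ N) :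
    ∃ U : Set G, IsOpen U ∧ u ∈ U ∧
      ∀ γ : G, S.src γ ∈ U ∩ S.units → S.rng γ ∈ U → γ ∈ N :=
  free_proper_small_neighborhood_general S hfree hproper u N hN huN
end

section
/- Let G be a locally compact Hausdorff groupoid, F ∈ C_c(G), W₀ a conditionally compact open neighborhood of G⁰, and K a compact subset of G. For every δ > 0 there exists an open neighborhood N of G⁰ in G such that for all γ ∈ K and all η ∈ N with r(η) = r(γ), we have |F(η⁻¹γ) − F(γ)| < δ. -/
open MeasureTheory Topology Set

/-!
The set `N` of all `η` with `‖F(η⁻¹γ) − F(γ)‖ < δ` for every `γ ∈ K` with `r(η) = r(γ)` works.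
It contains `G⁰`, since `u⁻¹γ = γ` for a unit `u = r(γ)`. It is open by the tube lemma over the
compact set `K`, because the pairs `(η, γ)` with `r(η) = r(γ)` form a closed set (as `G` is
Hausdorff) on which `(η, γ) ↦ F(η⁻¹γ) − F(γ)` is continuous.
-/

theorem isOpen_setOf_forall_mem_of_isCompact {X Y : Type*} [TopologicalSpace X]
    [TopologicalSpace Y] {U : Set (X × Y)} (hU : IsOpen U) {K : Set Y} (hK : IsCompact K) :
    IsOpen {x | ∀ y ∈ K, (x, y) ∈ U} :=
  isOpen_iff_mem_nhds.2 fun _ hx =>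
    hK.eventually_forall_of_forall_eventually fun y hy => hU.mem_nhds (hx y hy)

theorem isOpen_setOf_mem_imp_lt {X α : Type*} [TopologicalSpace X] [TopologicalSpace α]
    [LinearOrder α] [ClosedIciTopology α] {s : Set X} (hs : IsClosed s) {f : X → α}
    (hf : ContinuousOn f s) (c : α) : IsOpen {x | x ∈ s → f x < c} := by
  have hclosed : IsClosed (s ∩ f ⁻¹' Ici c) := hf.preimage_isClosed_of_isClosed hs isClosed_Ici
  convert hclosed.isOpen_compl using 1
  ext x
  simp [not_le]

namespace TopGroupoid

variable {G : Type*} [TopologicalSpace G] (S : TopGroupoid G)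

theorem isClosed_setOf_rng_eq_rng [T2Space G] :
    IsClosed {p : G × G | S.rng p.1 = S.rng p.2} :=
  isClosed_eq (S.continuous_rng.comp continuous_fst) (S.continuous_rng.comp continuous_snd)

theorem continuousOn_inv_mul :
    ContinuousOn (fun p : G × G => S.mul (S.inv p.1) p.2) {p | S.rng p.1 = S.rng p.2} := by
  rw [continuousOn_iff_continuous_domRestrict]
  have hpair : Continuous fun p : {p : G × G | S.rng p.1 = S.rng p.2} =>
      (⟨(S.inv p.1.1, p.1.2), by rw [S.src_inv]; exact p.2⟩ :
        {q : G × G // S.src q.1 = S.rng q.2}) :=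
    ((S.continuous_inv.comp (continuous_fst.comp continuous_subtype_val)).prodMk
      (continuous_snd.comp continuous_subtype_val)).subtype_mk _
  exact S.continuous_mul.comp hpair

theorem inv_eq_self_of_mem_units {u : G} (hu : u ∈ S.units) : S.inv u = u := by
  have h := S.unit_mul (S.inv u)
  rw [S.rng_inv, hu.2, S.mul_inv, hu.1] at h
  exact h.symm

theorem inv_mul_of_mem_units {u γ : G} (hu : u ∈ S.units) (h : S.rng u = S.rng γ) :
    S.mul (S.inv u) γ = γ := by
  rw [S.inv_eq_self_of_mem_units hu, ← hu.1, h, S.unit_mul]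

end TopGroupoid

theorem translation_uniformly_small_general {G : Type*} [TopologicalSpace G]
    [T2Space G]
    (S : TopGroupoid G)
    (F : G → ℂ) (hF : Continuous F)
    (K : Set G) (hK : IsCompact K) (δ : ℝ) (hδ : 0 < δ) :
    ∃ N : Set G, IsOpen N ∧ S.units ⊆ N ∧
      ∀ γ ∈ K, ∀ η ∈ N, S.rng η = S.rng γ →
        ‖F (S.mul (S.inv η) γ) - F γ‖ < δ := by
  have hdiff : ContinuousOn (fun p : G × G => ‖F (S.mul (S.inv p.1) p.2) - F p.2‖)
      {p | S.rng p.1 = S.rng p.2} :=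
    ((hF.comp_continuousOn S.continuousOn_inv_mul).sub
      (hF.comp continuous_snd).continuousOn).norm
  refine ⟨_, isOpen_setOf_forall_mem_of_isCompact
    (isOpen_setOf_mem_imp_lt S.isClosed_setOf_rng_eq_rng hdiff δ) hK, ?_,
    fun γ hγ η hη => hη γ hγ⟩
  intro u hu γ _ h
  simpa [S.inv_mul_of_mem_units hu h] using hδ

/-- Uniform continuity of left translation near the unit space: for
`F ∈ C_c(G)`, `W₀` a conditionally compact open neighborhood of `G⁰`, `K ⊆ G`
compact and `δ > 0`, there is an open neighborhood `N` of `G⁰` such that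
`|F(η⁻¹γ) − F(γ)| < δ` for all `γ ∈ K` and `η ∈ N` with `r(η) = r(γ)`. -/
theorem translation_uniformly_small {G : Type*} [TopologicalSpace G]
    [T2Space G] [LocallyCompactSpace G]
    (S : TopGroupoid G)
    (F : G → ℂ) (hF : Continuous F) (hFc : HasCompactSupport F)
    (W₀ : Set G) (hW₀open : IsOpen W₀) (hW₀units : S.units ⊆ W₀)
    (hW₀cc : ∀ V : Set G, IsCompact V →
      IsCompact (closure (S.setMul V W₀)) ∧ IsCompact (closure (S.setMul W₀ V)))
    (K : Set G) (hK : IsCompact K) (δ : ℝ) (hδ : 0 < δ) :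
    ∃ N : Set G, IsOpen N ∧ S.units ⊆ N ∧
      ∀ γ ∈ K, ∀ η ∈ N, S.rng η = S.rng γ →
        ‖F (S.mul (S.inv η) γ) - F γ‖ < δ :=
  translation_uniformly_small_general S F hF K hK δ hδ
end

section
/- Let G be a second countable locally compact Hausdorff groupoid with Haar system acting freely and properly on its unit space G⁰. Then the span of functions of the form γ ↦ f(r(γ))·\overline{g(s(γ))}, for f, g ∈ C_c(G⁰), is dense in C_c(G) in the inductive limit topology. -/
open MeasureTheory Topology Set

/-! Freeness makes `γ ↦ (r γ, s γ)` injective, so on a compact set `K` of arrows it is a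
homeomorphism onto its image in `G⁰ × G⁰`. There the functions `γ ↦ f (r γ) * conj (g (s γ))`
form a unital, star-closed, point-separating monoid, whose span is dense in `C(K)` by
Stone–Weierstrass. Taking for `K` the arrows with both ends in the support of a cutoff `φ`
(compact by properness) and multiplying by `φ (r γ) * φ (s γ)`, which is `1` on the support of
`F` and `0` off `K`, makes `f, g` compactly supported without increasing the error. -/

namespace ContinuousMap

theorem exists_apply_ne {X : Type*} [TopologicalSpace X] [T2Space X]
    [LocallyCompactSpace X] {x y : X} (hxy : x ≠ y) : ∃ f : C(X, ℂ), f x ≠ f y := by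
  obtain ⟨f, hfx, hfy, -⟩ := exists_continuous_one_zero_of_isCompact isCompact_singleton
    isClosed_singleton (disjoint_singleton.mpr hxy)
  refine ⟨⟨fun z => (f z : ℂ), by fun_prop⟩, ?_⟩
  simp [hfx rfl, hfy rfl]

variable {K X Y : Type*} [TopologicalSpace K] [TopologicalSpace X] [TopologicalSpace Y]

def rankOneSubmonoid (a : C(K, X)) (b : C(K, Y)) : Submonoid C(K, ℂ) where
  carrier := {p | ∃ (f : C(X, ℂ)) (g : C(Y, ℂ)), p = f.comp a * star (g.comp b)}
  one_mem' := ⟨1, 1, by ext; simp⟩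
  mul_mem' := by
    rintro - - ⟨f₁, g₁, rfl⟩ ⟨f₂, g₂, rfl⟩
    exact ⟨f₁ * f₂, g₁ * g₂, by ext; simp; ring⟩

variable {a : C(K, X)} {b : C(K, Y)}

theorem star_mem_rankOneSubmonoid {p : C(K, ℂ)} (hp : p ∈ rankOneSubmonoid a b) :
    star p ∈ rankOneSubmonoid a b := by
  obtain ⟨f, g, rfl⟩ := hp
  exact ⟨star f, star g, by ext; simp [mul_comm]⟩

theorem adjoin_rankOneSubmonoid_toSubmodule :
    Subalgebra.toSubmodule (StarAlgebra.adjoin ℂ (rankOneSubmonoid a b : Set C(K, ℂ))).toSubalgebra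
      = Submodule.span ℂ (rankOneSubmonoid a b) := by
  have hstar : star (rankOneSubmonoid a b : Set C(K, ℂ)) ⊆ rankOneSubmonoid a b :=
    fun p hp => by simpa using star_mem_rankOneSubmonoid (mem_star.mp hp)
  rw [StarAlgebra.adjoin_eq_span, union_eq_left.mpr hstar, Submonoid.closure_eq]

theorem separatesPoints_adjoin_rankOneSubmonoid [T2Space X] [LocallyCompactSpace X]
    [T2Space Y] [LocallyCompactSpace Y] (hab : Function.Injective fun k => (a k, b k)) :
    (StarAlgebra.adjoin ℂ (rankOneSubmonoid a b : Set C(K, ℂ))).SeparatesPoints := by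
  intro k k' hkk'
  have hne : a k ≠ a k' ∨ b k ≠ b k' := by
    by_contra! h
    exact hkk' (hab (Prod.ext h.1 h.2))
  rcases hne with ha | hb
  · obtain ⟨f, hf⟩ := exists_apply_ne ha
    refine ⟨_, ⟨_, StarAlgebra.subset_adjoin ℂ _ ⟨f, 1, rfl⟩, rfl⟩, ?_⟩
    simpa using hf
  · obtain ⟨g, hg⟩ := exists_apply_ne hb
    refine ⟨_, ⟨_, StarAlgebra.subset_adjoin ℂ _ ⟨1, star g, rfl⟩, rfl⟩, ?_⟩
    simpa using hg

theorem dense_span_rankOneSubmonoid [CompactSpace K] [T2Space X] [LocallyCompactSpace X]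
    [T2Space Y] [LocallyCompactSpace Y] (hab : Function.Injective fun k => (a k, b k)) :
    Dense (Submodule.span ℂ (rankOneSubmonoid a b : Set C(K, ℂ)) : Set C(K, ℂ)) := by
  have h := starSubalgebra_topologicalClosure_eq_top_of_separatesPoints _
    (separatesPoints_adjoin_rankOneSubmonoid hab)
  rw [← adjoin_rankOneSubmonoid_toSubmodule, dense_iff_closure_eq]
  exact congrArg SetLike.coe h

theorem exists_sum_rankOne_near [CompactSpace K] [T2Space X] [LocallyCompactSpace X]
    [T2Space Y] [LocallyCompactSpace Y] (hab : Function.Injective fun k => (a k, b k))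
    (F : C(K, ℂ)) {δ : ℝ} (hδ : 0 < δ) :
    ∃ (n : ℕ) (f : Fin n → C(X, ℂ)) (g : Fin n → C(Y, ℂ)),
      ∀ k, ‖F k - ∑ i, f i (a k) * starRingEnd ℂ (g i (b k))‖ < δ := by
  obtain ⟨p, hp, hFp⟩ := (dense_span_rankOneSubmonoid hab).exists_dist_lt F hδ
  obtain ⟨n, c, q, rfl⟩ := Submodule.mem_span_set'.mp hp
  choose f g hq using fun i => (q i).2
  refine ⟨n, fun i => c i • f i, g, fun k => ?_⟩
  calc _ = dist (F k) ((∑ i, c i • (q i : C(K, ℂ))) k) := by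
        simp [dist_eq_norm, hq, mul_assoc]
    _ < δ := (dist_apply_le_dist k).trans_lt hFp

end ContinuousMap

namespace TopGroupoid

variable {G : Type*} [TopologicalSpace G] (S : TopGroupoid G)

theorem injective_rngU_srcU (hfree : S.IsFree) :
    Function.Injective fun γ : G => (S.rngU γ, S.srcU γ) := by
  intro γ η hγη
  obtain ⟨hr, hs⟩ : S.rng γ = S.rng η ∧ S.src γ = S.src η :=
    ⟨congrArg (fun p => p.1.1) hγη, congrArg (fun p => p.2.1) hγη⟩
  have hcomp : S.src γ = S.rng (S.inv η) := by rw [S.rng_inv, hs]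
  have hunit : S.mul γ (S.inv η) ∈ S.units := hfree _ <| by
    rw [S.rng_mul _ _ hcomp, S.src_mul _ _ hcomp, S.src_inv, hr]
  have hrng : S.mul γ (S.inv η) = S.rng η := by
    rw [← hunit.1, S.rng_mul _ _ hcomp, hr]
  calc γ = S.mul (S.mul γ (S.inv η)) η := by
        rw [S.mul_assoc' _ _ _ hcomp (S.src_inv η), S.inv_mul, ← hs, S.mul_unit]
    _ = η := by rw [hrng, S.unit_mul]

theorem isClosed_units [T2Space G] : IsClosed S.units :=
  (isClosed_eq S.continuous_rng continuous_id).inter (isClosed_eq S.continuous_src continuous_id)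

theorem continuous_rngU : Continuous S.rngU := S.continuous_rng.subtype_mk _

theorem continuous_srcU : Continuous S.srcU := S.continuous_src.subtype_mk _

theorem isCompact_setOf_rngU_srcU_mem (hproper : S.IsProper) {T : Set S.units}
    (hT : IsCompact T) : IsCompact {γ | S.rngU γ ∈ T ∧ S.srcU γ ∈ T} := by
  have hTG : IsCompact (Subtype.val '' T) := hT.image continuous_subtype_val
  convert hproper.isCompact_preimage (hTG.prod hTG) using 1
  ext γ
  exact (Subtype.val_injective.mem_set_image.and Subtype.val_injective.mem_set_image).symm

theorem exists_sum_rankOne_near [T2Space G] [LocallyCompactSpace G] (hfree : S.IsFree)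
    {K : Set G} (hK : IsCompact K) {F : G → ℂ} (hF : ContinuousOn F K) {δ : ℝ} (hδ : 0 < δ) :
    ∃ (n : ℕ) (f g : Fin n → C(S.units, ℂ)), ∀ γ ∈ K,
      ‖F γ - ∑ i, f i (S.rngU γ) * starRingEnd ℂ (g i (S.srcU γ))‖ < δ := by
  have : LocallyCompactSpace S.units := S.isClosed_units.locallyCompactSpace
  have : CompactSpace K := isCompact_iff_compactSpace.mp hK
  obtain ⟨n, f, g, hfg⟩ := ContinuousMap.exists_sum_rankOne_near
    (a := ⟨fun γ : K => S.rngU γ, S.continuous_rngU.comp continuous_subtype_val⟩)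
    (b := ⟨fun γ : K => S.srcU γ, S.continuous_srcU.comp continuous_subtype_val⟩)
    ((S.injective_rngU_srcU hfree).comp Subtype.val_injective) ⟨K.domRestrict F, hF.domRestrict⟩ hδ
  exact ⟨n, f, g, fun γ hγ => hfg ⟨γ, hγ⟩⟩

end TopGroupoid

theorem Complex.norm_sub_ofReal_mul_le {z w : ℂ} {c : ℝ} (hc : c ∈ Icc 0 1)
    (hz : z ≠ 0 → c = 1) : ‖z - c * w‖ ≤ ‖z - w‖ := by
  rcases eq_or_ne z 0 with rfl | hz0
  · simpa [abs_of_nonneg hc.1] using mul_le_of_le_one_left (norm_nonneg w) hc.2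
  · simp [hz hz0]

theorem Complex.norm_sub_ofReal_mul_lt {z w : ℂ} {c δ : ℝ} (hδ : 0 < δ) (hc : c ∈ Icc 0 1)
    (hz : z ≠ 0 → c = 1) (hw : c ≠ 0 → ‖z - w‖ < δ) : ‖z - c * w‖ < δ := by
  rcases eq_or_ne c 0 with rfl | hc0
  · obtain rfl : z = 0 := not_not.mp fun h => zero_ne_one (hz h)
    simpa using hδ
  · exact (norm_sub_ofReal_mul_le hc hz).trans_lt (hw hc0)

theorem rank_one_span_dense_general {G : Type*} [TopologicalSpace G] [T2Space G]
    [LocallyCompactSpace G]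
    (S : TopGroupoid G) (hfree : S.IsFree) (hproper : S.IsProper)
    (F : G → ℂ) (hF : Continuous F) (hFc : HasCompactSupport F) :
    ∃ K : Set G, IsCompact K ∧ ∀ δ > (0:ℝ),
      ∃ (n : ℕ) (f g : Fin n → S.units → ℂ),
        (∀ i, Continuous (f i) ∧ HasCompactSupport (f i) ∧
          Continuous (g i) ∧ HasCompactSupport (g i)) ∧
        tsupport (fun γ : G =>
          ∑ i, f i (S.rngU γ) * starRingEnd ℂ (g i (S.srcU γ))) ⊆ K ∧
        ∀ γ : G,
          ‖F γ - ∑ i, f i (S.rngU γ) * starRingEnd ℂ (g i (S.srcU γ))‖ < δ := by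
  have : LocallyCompactSpace S.units := S.isClosed_units.locallyCompactSpace
  obtain ⟨φ, hφ_one, -, hφc, hφ_mem⟩ := exists_continuous_one_zero_of_isCompact
    ((hFc.image S.continuous_rngU).union (hFc.image S.continuous_srcU)) isClosed_empty
    (disjoint_empty _)
  set K := {γ | S.rngU γ ∈ tsupport φ ∧ S.srcU γ ∈ tsupport φ}
  have hK : IsCompact K := S.isCompact_setOf_rngU_srcU_mem hproper hφc
  refine ⟨K, hK, fun δ hδ => ?_⟩
  obtain ⟨n, f, g, hfg⟩ := S.exists_sum_rankOne_near hfree hK hF.continuousOn hδ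
  set c : G → ℝ := fun γ => φ (S.rngU γ) * φ (S.srcU γ)
  have hc_zero : ∀ γ ∉ K, c γ = 0 := fun γ hγ => by
    rcases not_and_or.mp hγ with h | h <;> simp [c, image_eq_zero_of_notMem_tsupport h]
  have hc_one : ∀ γ, F γ ≠ 0 → c γ = 1 := fun γ hγ => by
    have hγ' : γ ∈ tsupport F := subset_tsupport F hγ
    simp [c, hφ_one (Or.inl ⟨γ, hγ', rfl⟩), hφ_one (Or.inr ⟨γ, hγ', rfl⟩)]
  have hsum : ∀ γ, ∑ i, φ (S.rngU γ) * f i (S.rngU γ) *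
      starRingEnd ℂ (φ (S.srcU γ) * g i (S.srcU γ)) =
      c γ * ∑ i, f i (S.rngU γ) * starRingEnd ℂ (g i (S.srcU γ)) := fun γ => by
    simp only [c, Finset.mul_sum, map_mul, Complex.conj_ofReal, Complex.ofReal_mul]
    exact Finset.sum_congr rfl fun i _ => by ring
  have hφc' : HasCompactSupport fun u => (φ u : ℂ) := hφc.comp_left Complex.ofReal_zero
  refine ⟨n, fun i u => φ u * f i u, fun i u => φ u * g i u,
    fun i => ⟨by fun_prop, hφc'.mul_right, by fun_prop, hφc'.mul_right⟩, ?_, fun γ => ?_⟩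
  · refine closure_minimal (Function.support_subset_iff'.mpr fun γ hγ => ?_) hK.isClosed
    simp only [hsum, hc_zero γ hγ, Complex.ofReal_zero, zero_mul]
  · rw [hsum]
    refine Complex.norm_sub_ofReal_mul_lt hδ ⟨mul_nonneg (hφ_mem _).1 (hφ_mem _).1,
      mul_le_one₀ (hφ_mem _).2 (hφ_mem _).1 (hφ_mem _).2⟩ (hc_one γ) fun hc => hfg γ ?_
    by_contra hγ
    exact hc (hc_zero γ hγ)

/-- If `G` (second countable, locally compact Hausdorff, with Haar system) acts
freely and properly on its unit space, then the span of the functions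
`γ ↦ f(r(γ))·conj(g(s(γ)))`, `f, g ∈ C_c(G⁰)`, is dense in `C_c(G)` in the
inductive limit topology. -/
theorem rank_one_span_dense {G : Type*} [TopologicalSpace G] [T2Space G]
    [LocallyCompactSpace G] [SecondCountableTopology G] [MeasurableSpace G]
    (S : TopGroupoid G) (hfree : S.IsFree) (hproper : S.IsProper)
    (H : HaarSystem S)
    (F : G → ℂ) (hF : Continuous F) (hFc : HasCompactSupport F) :
    ∃ K : Set G, IsCompact K ∧ ∀ δ > (0:ℝ),
      ∃ (n : ℕ) (f g : Fin n → S.units → ℂ),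
        (∀ i, Continuous (f i) ∧ HasCompactSupport (f i) ∧
          Continuous (g i) ∧ HasCompactSupport (g i)) ∧
        tsupport (fun γ : G =>
          ∑ i, f i (S.rngU γ) * starRingEnd ℂ (g i (S.srcU γ))) ⊆ K ∧
        ∀ γ : G,
          ‖F γ - ∑ i, f i (S.rngU γ) * starRingEnd ℂ (g i (S.srcU γ))‖ < δ :=
  rank_one_span_dense_general S hfree hproper F hF hFc
end
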